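/- arXiv:1806.06283 — 7 statements merged into one kernel-verified Lean document; each statement's English description precedes it below -/
import Mathlib

section
/- Let ℓ > 0 and let ℬ ⊆ (ℤ/2)^ℓ be a linearly independent set of vectors over the field with two elements. If 𝒜 ⊆ (ℤ/2)^ℓ has |𝒜| ≥ 5 and 𝒜 + 𝒜 ⊆ ℬ + ℬ, then there is a unique x ∈ (ℤ/2)^ℓ such that 𝒜 + x ⊆ ℬ. -/
/-!
Fix `a₀ ∈ 𝒜`. By linear independence, a nonzero element of `ℬ + ℬ` is the sum of exactly one
2-subset of `ℬ`, so each `a + a₀` with `a ∈ 𝒜 \ {a₀}` determines a 2-subset `P_a ⊆ ℬ`. Any two of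
these intersect: if `P_a` and `P_a'` were disjoint, `P_a ∪ P_a'` would be a 4-subset of `ℬ` whose
sum `a + a'` lies in `ℬ + ℬ`. An intersecting family of at least four 2-sets is a star; if `g` is
its centre, then `𝒜 + (a₀ + g) ⊆ ℬ`.

For uniqueness, if `𝒜 + x ⊆ ℬ` and `𝒜 + y ⊆ ℬ` with `x ≠ y`, the two representations
`(a + x) + (a' + x) = a + a' = (a + y) + (a' + y)` must agree, forcing `a + x = a' + y` for all
distinct `a, a' ∈ 𝒜`; this is impossible once `𝒜` has three elements.
-/

open scoped Pointwise

namespace Finset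

variable {α : Type*} [DecidableEq α]

theorem eq_pair_of_card_eq_two {s : Finset α} {a b : α} (hs : s.card = 2) (hab : a ≠ b)
    (ha : a ∈ s) (hb : b ∈ s) : s = {a, b} :=
  (eq_of_subset_of_card_le (insert_subset_iff.2 ⟨ha, singleton_subset_iff.2 hb⟩)
    (by rw [hs, card_pair hab])).symm

theorem mem_of_not_disjoint_of_mem_three {P₁ P₂ P₃ Q : Finset α} {g : α}
    (h₁ : P₁.card = 2) (h₂ : P₂.card = 2) (h₃ : P₃.card = 2)
    (h₁₂ : P₁ ≠ P₂) (h₁₃ : P₁ ≠ P₃) (h₂₃ : P₂ ≠ P₃) (hg₁ : g ∈ P₁) (hg₂ : g ∈ P₂) (hg₃ : g ∈ P₃)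
    (hQ : Q.card ≤ 2) (hQ₁ : ¬Disjoint Q P₁) (hQ₂ : ¬Disjoint Q P₂) (hQ₃ : ¬Disjoint Q P₃) :
    g ∈ Q := by
  by_contra hgQ
  -- `Q` would contain the three points other than `g` of `P₁, P₂, P₃`.
  obtain ⟨x₁, hx₁Q, hx₁⟩ := not_disjoint_iff.1 hQ₁
  obtain ⟨x₂, hx₂Q, hx₂⟩ := not_disjoint_iff.1 hQ₂
  obtain ⟨x₃, hx₃Q, hx₃⟩ := not_disjoint_iff.1 hQ₃
  have hdist : ∀ {P P' : Finset α} {x : α}, P.card = 2 → P'.card = 2 → P ≠ P' → g ∈ P →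
      g ∈ P' → x ∈ Q → x ∈ P → x ∉ P' := fun {_ _ x} hP hP' hPP' hgP hgP' hxQ hxP hxP' =>
    have hgx : g ≠ x := fun h => hgQ (h ▸ hxQ)
    hPP' ((eq_pair_of_card_eq_two hP hgx hgP hxP).trans
      (eq_pair_of_card_eq_two hP' hgx hgP' hxP').symm)
  have : 2 < Q.card := two_lt_card.2 ⟨x₁, hx₁Q, x₂, hx₂Q, x₃, hx₃Q,
    fun h => hdist h₁ h₂ h₁₂ hg₁ hg₂ hx₁Q hx₁ (h ▸ hx₂),
    fun h => hdist h₁ h₃ h₁₃ hg₁ hg₃ hx₁Q hx₁ (h ▸ hx₃),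
    fun h => hdist h₂ h₃ h₂₃ hg₂ hg₃ hx₂Q hx₂ (h ▸ hx₃)⟩
  omega

end Finset

namespace Set.Intersecting

variable {α : Type*} [DecidableEq α] {𝒮 : Set (Finset α)}

/-- Otherwise `P₁, P₂, P₃` form a triangle `{g, y}, {g, z}, {y, z}`, and no fourth 2-set meets
all three of its sides. -/
theorem exists_mem_three_of_card_eq_two (h𝒮 : 𝒮.Intersecting) (hcard : ∀ P ∈ 𝒮, P.card = 2)
    {P₁ P₂ P₃ P₄ : Finset α} (hP₁ : P₁ ∈ 𝒮) (hP₂ : P₂ ∈ 𝒮) (hP₃ : P₃ ∈ 𝒮) (hP₄ : P₄ ∈ 𝒮)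
    (h₁₂ : P₁ ≠ P₂) (h₁₃ : P₁ ≠ P₃) (h₁₄ : P₁ ≠ P₄) (h₂₄ : P₂ ≠ P₄) (h₃₄ : P₃ ≠ P₄) :
    ∃ g, g ∈ P₁ ∧ g ∈ P₂ ∧ g ∈ P₃ := by
  obtain ⟨g, hg₁, hg₂⟩ := Finset.not_disjoint_iff.1 (h𝒮 hP₁ hP₂)
  by_cases hg₃ : g ∈ P₃
  · exact ⟨g, hg₁, hg₂, hg₃⟩
  obtain ⟨y, hy₁, hy₃⟩ := Finset.not_disjoint_iff.1 (h𝒮 hP₁ hP₃)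
  have hgy : g ≠ y := fun h => hg₃ (h ▸ hy₃)
  have hP₁_eq : P₁ = {g, y} := Finset.eq_pair_of_card_eq_two (hcard _ hP₁) hgy hg₁ hy₁
  obtain ⟨x, hx₄, hx₁⟩ := Finset.not_disjoint_iff.1 (h𝒮 hP₄ hP₁)
  rw [hP₁_eq, Finset.mem_insert, Finset.mem_singleton] at hx₁
  obtain rfl | rfl := hx₁
  · exact absurd (Finset.mem_of_not_disjoint_of_mem_three (hcard _ hP₁) (hcard _ hP₂)
      (hcard _ hP₄) h₁₂ h₁₄ h₂₄ hg₁ hg₂ hx₄ (hcard _ hP₃).le (h𝒮 hP₃ hP₁) (h𝒮 hP₃ hP₂)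
      (h𝒮 hP₃ hP₄)) hg₃
  · have hx₂ := Finset.mem_of_not_disjoint_of_mem_three (hcard _ hP₁) (hcard _ hP₃)
      (hcard _ hP₄) h₁₃ h₁₄ h₃₄ hy₁ hy₃ hx₄ (hcard _ hP₂).le (h𝒮 hP₂ hP₁) (h𝒮 hP₂ hP₃)
      (h𝒮 hP₂ hP₄)
    exact absurd (hP₁_eq.trans (Finset.eq_pair_of_card_eq_two (hcard _ hP₂) hgy hg₂ hx₂).symm) h₁₂

theorem exists_forall_mem_of_card_eq_two (h𝒮 : 𝒮.Intersecting) (hcard : ∀ P ∈ 𝒮, P.card = 2)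
    (h𝒮4 : 3 < 𝒮.encard) : ∃ g, ∀ P ∈ 𝒮, g ∈ P := by
  obtain ⟨𝒯, h𝒯𝒮, h𝒯⟩ := exists_subset_encard_eq (Order.add_one_le_of_lt h𝒮4)
  obtain ⟨P₁, P₂, P₃, P₄, h₁₂, h₁₃, h₁₄, h₂₃, h₂₄, h₃₄, rfl⟩ := encard_eq_four.1 h𝒯
  obtain ⟨hP₁, hP₂, hP₃, hP₄⟩ : P₁ ∈ 𝒮 ∧ P₂ ∈ 𝒮 ∧ P₃ ∈ 𝒮 ∧ P₄ ∈ 𝒮 := by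
    simpa [insert_subset_iff] using h𝒯𝒮
  obtain ⟨g, hg₁, hg₂, hg₃⟩ :=
    h𝒮.exists_mem_three_of_card_eq_two hcard hP₁ hP₂ hP₃ hP₄ h₁₂ h₁₃ h₁₄ h₂₄ h₃₄
  exact ⟨g, fun Q hQ => Finset.mem_of_not_disjoint_of_mem_three (hcard _ hP₁) (hcard _ hP₂)
    (hcard _ hP₃) h₁₂ h₁₃ h₂₃ hg₁ hg₂ hg₃ (hcard _ hQ).le (h𝒮 hQ hP₁) (h𝒮 hQ hP₂) (h𝒮 hQ hP₃)⟩

end Set.Intersecting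

theorem LinearIndepOn.eq_of_sum_eq_sum {R M ι : Type*} [Semiring R] [Nontrivial R]
    [AddCommMonoid M] [Module R M] {v : ι → M} {ℬ : Set ι} (hB : LinearIndepOn R v ℬ)
    {s t : Finset ι} (hs : ↑s ⊆ ℬ) (ht : ↑t ⊆ ℬ) (h : ∑ i ∈ s, v i = ∑ i ∈ t, v i) : s = t := by
  classical
  have hst : LinearIndepOn R v ↑(s ∪ t) := hB.mono (by simp [hs, ht])
  have hcoeff := linearIndepOn_finset_iffₛ.1 hst (fun i => if i ∈ s then 1 else 0)
    (fun i => if i ∈ t then 1 else 0) (by simpa [ite_smul, Finset.sum_ite_mem] using h)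
  ext i
  have hi := hcoeff i
  by_cases his : i ∈ s <;> by_cases hit : i ∈ t <;> simp_all

section CharTwo

variable {M : Type*} [AddCommGroup M] [Module (ZMod 2) M] {ℬ : Set M}

theorem ZModModule.add_add_add_cancel_right (a b z : M) : (a + z) + (b + z) = a + b := by
  rw [add_add_add_comm, ZModModule.add_self, add_zero]

theorem exists_card_eq_two_sum_eq_of_mem_add {w : M} (hw : w ∈ ℬ + ℬ) (hw0 : w ≠ 0) :
    ∃ P : Finset M, ↑P ⊆ ℬ ∧ P.card = 2 ∧ ∑ x ∈ P, x = w := by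
  classical
  obtain ⟨b, hb, c, hc, rfl⟩ := hw
  have hbc : b ≠ c := by rintro rfl; exact hw0 (ZModModule.add_self b)
  exact ⟨{b, c}, by simp [Set.insert_subset_iff, hb, hc], Finset.card_pair hbc,
    Finset.sum_pair hbc⟩

namespace LinearIndepOn

variable (hB : LinearIndepOn (ZMod 2) id ℬ)
include hB

theorem card_le_two_of_sum_mem_add {S : Finset M} (hS : ↑S ⊆ ℬ) (h : ∑ x ∈ S, x ∈ ℬ + ℬ) :
    S.card ≤ 2 := by
  classical
  by_cases h0 : ∑ x ∈ S, x = 0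
  · rw [hB.eq_of_sum_eq_sum (t := ∅) hS (by simp) (by simpa using h0)]
    simp
  · obtain ⟨P, hPB, hP, hPS⟩ := exists_card_eq_two_sum_eq_of_mem_add h h0
    rw [hB.eq_of_sum_eq_sum hS hPB hPS.symm, hP]

theorem not_disjoint_of_sum_add_sum_mem_add {P Q : Finset M} (hP : ↑P ⊆ ℬ) (hQ : ↑Q ⊆ ℬ)
    (hcard : 2 < P.card + Q.card) (h : ∑ x ∈ P, x + ∑ x ∈ Q, x ∈ ℬ + ℬ) : ¬Disjoint P Q := by
  classical
  intro hPQ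
  have := hB.card_le_two_of_sum_mem_add (S := P ∪ Q) (by simp [hP, hQ])
    (by rwa [Finset.sum_union hPQ])
  rw [Finset.card_union_of_disjoint hPQ] at this
  omega

/-- Both pairs represent `a + a'` as a sum of two distinct elements of `ℬ`, and by linear
independence that pair is unique. -/
theorem add_eq_add_of_add_mem {a a' x y : M} (ha : a ≠ a') (hxy : x ≠ y) (hax : a + x ∈ ℬ)
    (ha'x : a' + x ∈ ℬ) (hay : a + y ∈ ℬ) (ha'y : a' + y ∈ ℬ) : a + x = a' + y := by
  classical
  have hne : ∀ z, a + z ≠ a' + z := fun z h => ha (add_right_cancel h)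
  have hpair : ({a + x, a' + x} : Finset M) = {a + y, a' + y} :=
    hB.eq_of_sum_eq_sum (by simp [Set.insert_subset_iff, hax, ha'x])
      (by simp [Set.insert_subset_iff, hay, ha'y])
      (by simp only [id]; rw [Finset.sum_pair (hne x), Finset.sum_pair (hne y),
        ZModModule.add_add_add_cancel_right, ZModModule.add_add_add_cancel_right])
  have hmem : a + x ∈ ({a + y, a' + y} : Finset M) := hpair ▸ Finset.mem_insert_self _ _
  rw [Finset.mem_insert, Finset.mem_singleton] at hmem
  exact hmem.resolve_left fun h => hxy (add_left_cancel h)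

theorem eq_of_forall_add_mem {S : Set M} (hS : 2 < S.encard) {x y : M}
    (hx : ∀ a ∈ S, a + x ∈ ℬ) (hy : ∀ a ∈ S, a + y ∈ ℬ) : x = y := by
  by_contra hxy
  obtain ⟨T, hTS, hT⟩ := Set.exists_subset_encard_eq (Order.add_one_le_of_lt hS)
  obtain ⟨a, b, c, hab, hac, hbc, rfl⟩ := Set.encard_eq_three.1 hT
  obtain ⟨ha, hb, hc⟩ : a ∈ S ∧ b ∈ S ∧ c ∈ S := by simpa [Set.insert_subset_iff] using hTS
  have hab' := hB.add_eq_add_of_add_mem hab hxy (hx a ha) (hx b hb) (hy a ha) (hy b hb)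
  have hac' := hB.add_eq_add_of_add_mem hac hxy (hx a ha) (hx c hc) (hy a ha) (hy c hc)
  exact hbc (add_right_cancel (hab'.symm.trans hac'))

theorem exists_forall_add_mem {S : Set M} (hS : 4 < S.encard) (hSB : S + S ⊆ ℬ + ℬ) :
    ∃ x, ∀ a ∈ S, a + x ∈ ℬ := by
  classical
  obtain ⟨a₀, ha₀⟩ := Set.encard_pos.1 (lt_trans (by norm_num) hS)
  set 𝒮 : Set (Finset M) := {P | ↑P ⊆ ℬ ∧ P.card = 2 ∧ ∃ a ∈ S, ∑ x ∈ P, x = a + a₀}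
  have hpair : ∀ a ∈ S, a ≠ a₀ → ∃ P ∈ 𝒮, ∑ x ∈ P, x = a + a₀ := fun a ha hne => by
    obtain ⟨P, hPB, hP, hPa⟩ := exists_card_eq_two_sum_eq_of_mem_add
      (hSB (Set.add_mem_add ha ha₀)) (by rwa [Ne, ← ZModModule.sub_eq_add, sub_eq_zero])
    exact ⟨P, ⟨hPB, hP, a, ha, hPa⟩, hPa⟩
  have h𝒮 : 𝒮.Intersecting := by
    rintro P ⟨hPB, hP, a, ha, hPa⟩ Q ⟨hQB, hQ, a', ha', hQa'⟩
    refine hB.not_disjoint_of_sum_add_sum_mem_add hPB hQB (by omega) ?_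
    rw [hPa, hQa', ZModModule.add_add_add_cancel_right]
    exact hSB (Set.add_mem_add ha ha')
  have h𝒮card : 3 < 𝒮.encard := by
    have hsub : (· + a₀) '' (S \ {a₀}) ⊆ (fun P => ∑ x ∈ P, x) '' 𝒮 := by
      rintro _ ⟨a, ⟨ha, hne⟩, rfl⟩
      exact hpair a ha hne
    rw [← Set.encard_sdiff_singleton_add_one ha₀] at hS
    calc 3 < (S \ {a₀}).encard := (ENat.add_lt_add_iff_right ENat.one_ne_top).1 hS
      _ = ((· + a₀) '' (S \ {a₀})).encard := ((add_left_injective a₀).encard_image _).symm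
      _ ≤ ((fun P => ∑ x ∈ P, x) '' 𝒮).encard := Set.encard_le_encard hsub
      _ ≤ 𝒮.encard := Set.encard_image_le _ _
  obtain ⟨g, hg⟩ := h𝒮.exists_forall_mem_of_card_eq_two (fun P hP => hP.2.1) h𝒮card
  refine ⟨a₀ + g, fun a ha => ?_⟩
  obtain rfl | hne := eq_or_ne a a₀
  · obtain ⟨P, hP⟩ := Set.encard_pos.1 (lt_trans (by norm_num) h𝒮card)
    rw [← add_assoc, ZModModule.add_self, zero_add]
    exact hP.1 (hg P hP)
  · obtain ⟨P, hP, hPa⟩ := hpair a ha hne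
    obtain ⟨z, hz⟩ := Finset.card_eq_one.1 (by rw [Finset.card_erase_of_mem (hg P hP), hP.2.1] :
      (P.erase g).card = 1)
    rw [← Finset.add_sum_erase P _ (hg P hP), hz, Finset.sum_singleton] at hPa
    rw [← add_assoc, ← hPa, add_comm g z, add_assoc, ZModModule.add_self, add_zero]
    exact hP.1 (Finset.mem_of_mem_erase (hz ▸ Finset.mem_singleton_self z))

end LinearIndepOn

end CharTwo

theorem stmt_2_general (ℓ : ℕ) (ℬ 𝒜 : Set (Fin ℓ → ZMod 2))
    (hB : LinearIndependent (ZMod 2) ((↑) : ℬ → (Fin ℓ → ZMod 2)))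
    (hA : 5 ≤ 𝒜.ncard) (hAB : 𝒜 + 𝒜 ⊆ ℬ + ℬ) :
    ∃! x : Fin ℓ → ZMod 2, (fun a => a + x) '' 𝒜 ⊆ ℬ := by
  have hB : LinearIndepOn (ZMod 2) id ℬ := hB
  have hA : 4 < 𝒜.encard := by
    rw [← (Set.finite_of_ncard_pos (by omega)).cast_ncard_eq]
    exact_mod_cast hA
  obtain ⟨x, hx⟩ := hB.exists_forall_add_mem hA hAB
  exact ⟨x, Set.image_subset_iff.2 hx, fun y hy =>
    hB.eq_of_forall_add_mem (lt_trans (by norm_num) hA) (Set.image_subset_iff.1 hy) hx⟩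

/-- If ℬ ⊆ (ℤ/2)^ℓ is linearly independent, 𝒜 ⊆ (ℤ/2)^ℓ has at least 5 elements and
𝒜 + 𝒜 ⊆ ℬ + ℬ, then there is a unique x with 𝒜 + x ⊆ ℬ. -/
theorem stmt_2 (ℓ : ℕ) (hℓ : 0 < ℓ) (ℬ 𝒜 : Set (Fin ℓ → ZMod 2))
    (hB : LinearIndependent (ZMod 2) ((↑) : ℬ → (Fin ℓ → ZMod 2)))
    (hA : 5 ≤ 𝒜.ncard) (hAB : 𝒜 + 𝒜 ⊆ ℬ + ℬ) :
    ∃! x : Fin ℓ → ZMod 2, (fun a => a + x) '' 𝒜 ⊆ ℬ :=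
  stmt_2_general ℓ ℬ 𝒜 hB hA hAB
end

section
/- Let ℓ > 0, let ℬ ⊆ (ℤ/2)^ℓ be linearly independent over ℤ/2, and let b* ∈ ℬ. Suppose ρ⁰_i, ρ¹_i ∈ (ℬ ∪ (b* + ℬ)) \ {0, b*} for i < 3 are such that (a) there are no repetitions in the sequence ⟨ρ⁰_i, ρ¹_i : i < 3⟩ (six distinct elements), and (b) ρ⁰_i + ρ¹_i = ρ⁰_j + ρ¹_j for all i < j < 3. Then every pair {ρ⁰_i, ρ¹_i} is of the form {b, b + b*} for some b ∈ ℬ with b ≠ b*. -/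
/-!
Write each `ρ` as `β + κ • b*` with `β ∈ ℬ \ {b*}` and `κ ∈ ℤ/2`. If no pair had equal bases
`β⁰ᵢ = β¹ᵢ`, linear independence would force all the sets `{β⁰ᵢ, β¹ᵢ}` to coincide, since they
can be read off the common sum `ρ⁰ᵢ + ρ¹ᵢ` modulo `b*`; the six distinct vectors would then lie
among the four vectors `β + κ • b*`. So some pair has equal bases, which makes the common sum
equal to `b*`, and then every pair is `{b, b + b*}`.
-/

open Function Set Submodule

theorem LinearIndepOn.eq_or_eq_of_add_add_smul_eq {K V : Type*} [Ring K] [Nontrivial K]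
    [AddCommGroup V] [Module K V] {ℬ : Set V} (hB : LinearIndepOn K id ℬ) {a a' c c' t : V}
    (ha : a ∈ ℬ) (ha' : a' ∈ ℬ) (hc : c ∈ ℬ) (hc' : c' ∈ ℬ) (ht : t ∈ ℬ)
    (haa' : a ≠ a') (hat : a ≠ t) {k k' : K} (h : a + a' + k • t = c + c' + k' • t) :
    a = c ∨ a = c' := by
  by_contra! hne
  have hmem : ∀ x ∈ ℬ, x ≠ a → x ∈ span K (id '' (ℬ \ {a})) := fun x hx hxa =>
    subset_span ⟨x, ⟨hx, hxa⟩, rfl⟩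
  have hspan : c + c' - a' + (k' • t - k • t) ∈ span K (id '' (ℬ \ {a})) :=
    add_mem (sub_mem (add_mem (hmem c hc hne.1.symm) (hmem c' hc' hne.2.symm))
      (hmem a' ha' haa'.symm))
      (sub_mem (smul_mem _ _ (hmem t ht hat.symm)) (smul_mem _ _ (hmem t ht hat.symm)))
  have ha_eq : c + c' - a' + (k' • t - k • t) = a :=
    calc c + c' - a' + (k' • t - k • t) = c + c' + k' • t - (a' + k • t) := by abel
      _ = a := by rw [← h]; abel
  exact hB.notMem_span ha (ha_eq ▸ hspan)

section CharTwo

variable {V : Type*} [AddCommGroup V] [Module (ZMod 2) V]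

theorem exists_mem_eq_add_smul_of_mem_diff {ℬ : Set V} {t ρ : V}
    (h : ρ ∈ (ℬ ∪ (fun b => t + b) '' ℬ) \ {0, t}) :
    ∃ b ∈ ℬ, b ≠ t ∧ ∃ k : ZMod 2, ρ = b + k • t := by
  obtain ⟨hρ | ⟨b, hb, rfl⟩, hρ0t⟩ := h
  · exact ⟨ρ, hρ, fun h => hρ0t (Or.inr h), 0, by rw [zero_smul, add_zero]⟩
  · refine ⟨b, hb, ?_, 1, by rw [one_smul, add_comm]⟩
    rintro rfl
    exact hρ0t (Or.inl (ZModModule.add_self b))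

theorem add_smul_add_add_smul_of_ne {b t : V} {k k' : ZMod 2}
    (h : b + k • t ≠ b + k' • t) : b + k • t + (b + k' • t) = t := by
  have hkk' : k + k' = 1 := by
    have : ∀ k k' : ZMod 2, k ≠ k' → k + k' = 1 := by decide
    exact this k k' fun hk => h (by rw [hk])
  calc b + k • t + (b + k' • t) = (k + k') • t + (b + b) := by module
    _ = t := by rw [hkk', one_smul, ZModModule.add_self, add_zero]

theorem pair_eq_of_eq_add {b t ρ ρ' : V} {k : ZMod 2} (hρ : ρ = b + k • t) (hρ' : ρ' = ρ + t) :
    ({ρ, ρ'} : Set V) = {b, b + t} := by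
  subst hρ hρ'
  have : k = 0 ∨ k = 1 := by revert k; decide
  rcases this with rfl | rfl
  · rw [zero_smul, add_zero]
  · rw [one_smul, add_assoc, ZModModule.add_self, add_zero]
    exact pair_comm _ _

theorem exists_eq_of_injective_of_pair_sums_eq {ι : Type*} [Fintype ι]
    (hι : 2 < Fintype.card ι) {ℬ : Set V} (hB : LinearIndepOn (ZMod 2) id ℬ) {t : V}
    (ht : t ∈ ℬ) {ρ β : ι → Fin 2 → V} {κ : ι → Fin 2 → ZMod 2} (hβ : ∀ i e, β i e ∈ ℬ)
    (hβt : ∀ i e, β i e ≠ t) (hρ : ∀ i e, ρ i e = β i e + κ i e • t)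
    (hinj : Injective fun p : ι × Fin 2 => ρ p.1 p.2)
    (hsum : ∀ i j, ρ i 0 + ρ i 1 = ρ j 0 + ρ j 1) :
    ∃ i, β i 0 = β i 1 := by
  classical
  by_contra! hne
  simp only [hρ] at hinj hsum
  obtain ⟨i₀⟩ : Nonempty ι := Fintype.card_pos_iff.mp (by omega)
  have hbase (i : ι) : ∀ e, β i e = β i₀ 0 ∨ β i e = β i₀ 1 := by
    have h : β i 0 + β i 1 + (κ i 0 + κ i 1) • t = β i₀ 0 + β i₀ 1 + (κ i₀ 0 + κ i₀ 1) • t := by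
      linear_combination (norm := module) hsum i i₀
    rw [Fin.forall_fin_two]
    exact ⟨hB.eq_or_eq_of_add_add_smul_eq (hβ i 0) (hβ i 1) (hβ i₀ 0) (hβ i₀ 1) ht
        (hne i) (hβt i 0) h,
      hB.eq_or_eq_of_add_add_smul_eq (hβ i 1) (hβ i 0) (hβ i₀ 0) (hβ i₀ 1) ht
        (hne i).symm (hβt i 1) (by rwa [add_comm (β i 1)])⟩
  have hmaps : MapsTo (fun p : ι × Fin 2 => β p.1 p.2 + κ p.1 p.2 • t)
      (Finset.univ : Finset (ι × Fin 2))
      ({β i₀ 0, β i₀ 0 + t, β i₀ 1, β i₀ 1 + t} : Finset V) := by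
    rintro ⟨i, e⟩ -
    have hκ : κ i e = 0 ∨ κ i e = 1 := by generalize κ i e = k; revert k; decide
    rcases hbase i e with h | h <;> rcases hκ with h' | h' <;> simp [h, h']
  have hcard := Finset.card_le_card_of_injOn _ hmaps hinj.injOn
  simp only [Finset.card_univ, Fintype.card_prod, Fintype.card_fin] at hcard
  have := hcard.trans Finset.card_le_four
  omega

end CharTwo

theorem stmt_3_general (ℓ : ℕ) (ℬ : Set (Fin ℓ → ZMod 2))
    (hB : LinearIndependent (ZMod 2) ((↑) : ℬ → (Fin ℓ → ZMod 2)))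
    (bstar : Fin ℓ → ZMod 2) (hbstar : bstar ∈ ℬ)
    (ρ : Fin 3 → Fin 2 → Fin ℓ → ZMod 2)
    (hmem : ∀ i : Fin 3, ∀ e : Fin 2,
      ρ i e ∈ (ℬ ∪ ((fun b => bstar + b) '' ℬ)) \ {0, bstar})
    (hinj : Function.Injective (fun p : Fin 3 × Fin 2 => ρ p.1 p.2))
    (hsum : ∀ i j : Fin 3, i < j → ρ i 0 + ρ i 1 = ρ j 0 + ρ j 1) :
    ∀ i : Fin 3, ∃ b ∈ ℬ, b ≠ bstar ∧
      ({ρ i 0, ρ i 1} : Set (Fin ℓ → ZMod 2)) = {b, b + bstar} := by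
  choose β hβ hβt κ hρ using fun i e => exists_mem_eq_add_smul_of_mem_diff (hmem i e)
  have hsum' (i j : Fin 3) : ρ i 0 + ρ i 1 = ρ j 0 + ρ j 1 := by
    rcases lt_trichotomy i j with h | rfl | h
    exacts [hsum i j h, rfl, (hsum j i h).symm]
  obtain ⟨i₀, hi₀⟩ :=
    exists_eq_of_injective_of_pair_sums_eq (by simp) hB hbstar hβ hβt hρ hinj hsum'
  have hs : ρ i₀ 0 + ρ i₀ 1 = bstar := by
    have hne : ρ i₀ 0 ≠ ρ i₀ 1 := fun h => by simpa using @hinj (i₀, 0) (i₀, 1) h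
    rw [hρ, hρ, hi₀] at hne ⊢
    exact add_smul_add_add_smul_of_ne hne
  intro i
  refine ⟨β i 0, hβ i 0, hβt i 0, pair_eq_of_eq_add (hρ i 0) ?_⟩
  rw [← hs, ← hsum' i i₀, ← add_assoc, ZModModule.add_self, zero_add]

/-- Lemma 4.3(2): if ℬ ⊆ (ℤ/2)^ℓ is linearly independent, b* ∈ ℬ, and
ρ⁰ᵢ, ρ¹ᵢ ∈ (ℬ ∪ (b* + ℬ)) \ {0, b*} (i < 3) are six pairwise distinct vectors with
ρ⁰ᵢ + ρ¹ᵢ constant, then each pair {ρ⁰ᵢ, ρ¹ᵢ} is {b, b + b*} for some b ∈ ℬ, b ≠ b*. -/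
theorem stmt_3 (ℓ : ℕ) (hℓ : 0 < ℓ) (ℬ : Set (Fin ℓ → ZMod 2))
    (hB : LinearIndependent (ZMod 2) ((↑) : ℬ → (Fin ℓ → ZMod 2)))
    (bstar : Fin ℓ → ZMod 2) (hbstar : bstar ∈ ℬ)
    (ρ : Fin 3 → Fin 2 → Fin ℓ → ZMod 2)
    (hmem : ∀ i : Fin 3, ∀ e : Fin 2,
      ρ i e ∈ (ℬ ∪ ((fun b => bstar + b) '' ℬ)) \ {0, bstar})
    (hinj : Function.Injective (fun p : Fin 3 × Fin 2 => ρ p.1 p.2))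
    (hsum : ∀ i j : Fin 3, i < j → ρ i 0 + ρ i 1 = ρ j 0 + ρ j 1) :
    ∀ i : Fin 3, ∃ b ∈ ℬ, b ≠ bstar ∧
      ({ρ i 0, ρ i 1} : Set (Fin ℓ → ZMod 2)) = {b, b + bstar} :=
  stmt_3_general ℓ ℬ hB bstar hbstar ρ hmem hinj hsum
end

section
/- Monotonicity of rank: if 𝕄 is a model with universe λ and countable vocabulary, ∅ ≠ v ⊆ w are finite subsets of λ, and rk(w, 𝕄) ≥ α ≥ β, then rk(v, 𝕄) ≥ β. -/
open FirstOrder Cardinal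

attribute [local instance] Classical.propDecidable

section Rank
variable (L : Language) (M : Type) [L.Structure M]

/-- The condition for `rk(w) ≥ 0`: every quantifier-free formula satisfied by an
injective enumeration of `w` admits uncountably many replacements at each coordinate. -/
def RkBase (w : Finset M) : Prop :=
  ∀ (n : ℕ) (v : Fin n → M), Function.Injective v → Set.range v = ↑w →
    ∀ φ : L.Formula (Fin n), φ.IsQF → φ.Realize v →
      ∀ k : Fin n, ¬ ({a : M | φ.Realize (Function.update v k a)}).Countable

/-- The successor condition for `rk`, relative to a predicate `rk` standing for "rank ≥ β". -/
def RkSuccCond (rk : Finset M → Prop) (w : Finset M) : Prop :=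
  ∀ (n : ℕ) (v : Fin n → M), Function.Injective v → Set.range v = ↑w →
    ∀ φ : L.Formula (Fin n), φ.IsQF → φ.Realize v →
      ∀ k : Fin n, ∃ a : M, a ∉ w ∧ rk (insert a w) ∧
        φ.Realize (Function.update v k a)

/-- `RkGe L M w α` says `rk(w, 𝕄) ≥ α`. -/
def RkGe (w : Finset M) (α : Ordinal) : Prop :=
  RkBase L M w ∧ ∀ β : Ordinal, β < α → RkSuccCond L M (fun w' => RkGe w' β) w
termination_by α

/-- The successor condition for `rk*`: an `ω₁`-sequence of witnesses. -/
def RkStarSuccCond (rk : Finset M → Prop) (w : Finset M) : Prop :=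
  ∀ (n : ℕ) (v : Fin n → M), Function.Injective v → Set.range v = ↑w →
    ∀ φ : L.Formula (Fin n), φ.IsQF → φ.Realize v →
      ∀ k : Fin n, ∃ a : Ordinal.{0} → M,
        Set.InjOn a {i : Ordinal.{0} | i < (Cardinal.aleph 1).ord} ∧
        a 0 = v k ∧
        (∀ i : Ordinal.{0}, i < (Cardinal.aleph 1).ord → a i ∉ w.erase (v k)) ∧
        (∀ i : Ordinal.{0}, i < (Cardinal.aleph 1).ord → φ.Realize (Function.update v k (a i))) ∧
        (∀ i j : Ordinal.{0}, i < j → j < (Cardinal.aleph 1).ord →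
          rk (insert (a i) (insert (a j) (w.erase (v k)))))

/-- `RkStarGe L M w α` says `rk*(w, 𝕄) ≥ α`. -/
def RkStarGe (w : Finset M) (α : Ordinal) : Prop :=
  RkBase L M w ∧ ∀ β : Ordinal, β < α → RkStarSuccCond L M (fun w' => RkStarGe w' β) w
termination_by α

end Rank

/-- `NPr ε λ`: there is a model on a universe of size `λ` with countable relational
vocabulary all of whose finite nonempty subsets have rank `< ε`. -/
def NPr (ε : Ordinal) (lam : Cardinal) : Prop :=
  ∃ (M : Type) (L : FirstOrder.Language.{0,0}) (S : L.Structure M),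
    Cardinal.mk M = lam ∧ (∀ n, Countable (L.Relations n)) ∧
    (∀ n, IsEmpty (L.Functions n)) ∧
    ∀ w : Finset M, w.Nonempty → ¬ @RkGe L M S w ε

/-- `NPr* ε λ`, the analogue of `NPr` for the rank `rk*`. -/
def NPrStar (ε : Ordinal) (lam : Cardinal) : Prop :=
  ∃ (M : Type) (L : FirstOrder.Language.{0,0}) (S : L.Structure M),
    Cardinal.mk M = lam ∧ (∀ n, Countable (L.Relations n)) ∧
    (∀ n, IsEmpty (L.Functions n)) ∧
    ∀ w : Finset M, w.Nonempty → ¬ @RkStarGe L M S w ε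

/-! Every enumeration of `v ⊆ w` factors through an enumeration of `w`, so relabelling turns each
quantifier-free condition on `v` into one on `w` with the same solutions at the chosen coordinate;
witnesses for `w` then serve for `v`, and induction on the ordinal carries this through all levels. -/

section Monotonicity
variable {L : Language} {M : Type} [L.Structure M]

lemma Finset.exists_fin_enum (s : Finset M) :
    ∃ u : Fin s.card → M, Function.Injective u ∧ Set.range u = ↑s := by
  refine ⟨Subtype.val ∘ s.equivFin.symm, Subtype.val_injective.comp s.equivFin.symm.injective, ?_⟩
  rw [Set.range_comp, Equiv.range_eq_univ, Set.image_univ, Subtype.range_coe_subtype]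
  rfl

lemma exists_isQF_relabel_of_subset {v w : Finset M} (hvw : v ⊆ w) {n : ℕ} {f : Fin n → M}
    (hf : Function.Injective f) (hr : Set.range f = ↑v) {φ : L.Formula (Fin n)} (hφ : φ.IsQF)
    (hφf : φ.Realize f) (k : Fin n) :
    ∃ (m : ℕ) (u : Fin m → M) (ψ : L.Formula (Fin m)) (k' : Fin m),
      Function.Injective u ∧ Set.range u = ↑w ∧ ψ.IsQF ∧ ψ.Realize u ∧
        ∀ a, ψ.Realize (Function.update u k' a) ↔ φ.Realize (Function.update f k a) := by
  obtain ⟨u, hu, hru⟩ := w.exists_fin_enum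
  obtain ⟨g, rfl⟩ : ∃ g, f = u ∘ g :=
    Set.range_subset_range_iff_exists_comp.mp (hr ▸ hru ▸ Finset.coe_subset.mpr hvw)
  have hg : Function.Injective g := hf.of_comp
  refine ⟨_, u, φ.relabel g, g k, hu, hru, hφ.relabel _, ?_, fun a => ?_⟩
  · rwa [Language.Formula.realize_relabel]
  · rw [Language.Formula.realize_relabel, Function.update_comp_eq_of_injective _ hg]

variable {v w : Finset M}

lemma RkBase.of_subset (h : RkBase L M w) (hvw : v ⊆ w) : RkBase L M v := by
  intro n f hf hr φ hφ hφf k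
  obtain ⟨m, u, ψ, k', hu, hru, hψ, hψu, hψφ⟩ := exists_isQF_relabel_of_subset hvw hf hr hφ hφf k
  simpa only [hψφ] using h m u hu hru ψ hψ hψu k'

lemma RkSuccCond.of_subset {rk rk' : Finset M → Prop} (h : RkSuccCond L M rk w) (hvw : v ⊆ w)
    (hrk : ∀ a, rk (insert a w) → rk' (insert a v)) : RkSuccCond L M rk' v := by
  intro n f hf hr φ hφ hφf k
  obtain ⟨m, u, ψ, k', hu, hru, hψ, hψu, hψφ⟩ := exists_isQF_relabel_of_subset hvw hf hr hφ hφf k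
  obtain ⟨a, haw, hrka, ha⟩ := h m u hu hru ψ hψ hψu k'
  exact ⟨a, fun hav => haw (hvw hav), hrk a hrka, (hψφ a).mp ha⟩

lemma RkGe.of_subset {α : Ordinal} (h : RkGe L M w α) (hvw : v ⊆ w) : RkGe L M v α := by
  induction α using WellFoundedLT.induction generalizing v w with
  | ind α ih =>
    rw [RkGe] at h ⊢
    exact ⟨h.1.of_subset hvw, fun β hβ =>
      (h.2 β hβ).of_subset hvw fun a ha => ih β hβ ha (Finset.insert_subset_insert a hvw)⟩

lemma RkGe.of_le {α β : Ordinal} (h : RkGe L M w α) (hβα : β ≤ α) : RkGe L M w β := by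
  rw [RkGe] at h ⊢
  exact ⟨h.1, fun γ hγ => h.2 γ (hγ.trans_le hβα)⟩

end Monotonicity

theorem stmt_5_general (L : FirstOrder.Language) (M : Type) [L.Structure M]
    (v w : Finset M) (hvw : v ⊆ w)
    (α β : Ordinal) (hβα : β ≤ α) (h : RkGe L M w α) :
    RkGe L M v β :=
  (h.of_le hβα).of_subset hvw

/-- Monotonicity of the rank: if ∅ ≠ v ⊆ w and rk(w, 𝕄) ≥ α ≥ β then rk(v, 𝕄) ≥ β. -/
theorem stmt_5 (L : FirstOrder.Language) (M : Type) [L.Structure M]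
    (v w : Finset M) (hv : v.Nonempty) (hvw : v ⊆ w)
    (α β : Ordinal) (hβα : β ≤ α) (h : RkGe L M w α) :
    RkGe L M v β :=
  stmt_5_general L M v w hvw α β hβα h
end

section
/- If NPr_ε(λ) holds, then NPr_{ε+1}(λ⁺) holds. -/
open FirstOrder Cardinal

attribute [local instance] Classical.propDecidable

/-! Let `M` witness `NPr_ε(λ)` and fix maps `g γ` injective on `{x | x < γ}` for `γ < λ⁺`. On `λ⁺`,
read each relation `R` of `M` as `R(g γ x₀, …, g γ xₙ₋₁)` with `γ` as an extra last argument,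
and add the relation `x₀, …, xₙ₋₁ < γ`. A quantifier-free formula satisfied by an enumeration
of `g γ '' s` then lifts to one satisfied by `s ∪ {γ}` which moreover keeps the varied
coordinate below `γ`; so by induction on `β`, `rk(s ∪ {γ}) ≥ β` forces `rk(g γ '' s) ≥ β`
when `s < γ`. A nonempty `w` of rank `≥ ε + 1` has an extension `w ∪ {a}` of rank `≥ ε` with
at least two elements; splitting off its maximum `γ` leaves a nonempty `s`, whose image in `M`
would have rank `≥ ε`. -/

section

universe u v

open FirstOrder.Language Structure BoundedFormula Set Function

-- `none` in arity `n + 1` names the relation `x₀, …, xₙ₋₁ < xₙ`.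
def liftLang (L : FirstOrder.Language.{u, v}) : FirstOrder.Language.{0, v} where
  Functions _ := Empty
  Relations
    | 0 => PEmpty
    | n + 1 => Option (L.Relations n)

theorem exists_rkGe_insert_of_rkGe_add_one {L : FirstOrder.Language} {M : Type} [L.Structure M]
    {w : Finset M} (hw : w.Nonempty) {β : Ordinal} (h : RkGe L M w (β + 1)) :
    ∃ a ∉ w, RkGe L M (insert a w) β := by
  rw [RkGe] at h
  let e := w.equivFin.symm
  have he : range (fun i => (e i : M)) = ↑w := by
    rw [range_comp' Subtype.val, e.range_eq_univ, image_univ, Subtype.range_coe]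
  obtain ⟨a, ha, hrk, -⟩ := h.2 β (Order.lt_add_one_iff.mpr le_rfl) w.card _
    (Subtype.val_injective.comp e.injective) he ⊤ IsQF.top (Formula.realize_top.mpr trivial)
    ⟨0, hw.card_pos⟩
  exact ⟨a, ha, hrk⟩

theorem nPr_add_one_one (ε : Ordinal) : NPr (ε + 1) 1 := by
  let _ : Language.empty.Structure Unit := emptyStructure
  refine ⟨Unit, Language.empty, emptyStructure, mk_eq_one Unit, fun _ => inferInstance,
    fun _ => inferInstance, fun w hw hrk => ?_⟩
  obtain ⟨a, ha, -⟩ := exists_rkGe_insert_of_rkGe_add_one hw hrk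
  obtain ⟨x, hx⟩ := hw
  exact ha (Subsingleton.elim x a ▸ hx)

theorem exists_injOn_of_mk_le {α β : Type u} [Nonempty β] {s : Set α} (h : #s ≤ #β) :
    ∃ f : α → β, s.InjOn f := by
  obtain ⟨e⟩ := h
  refine ⟨fun x => if hx : x ∈ s then e ⟨x, hx⟩ else Classical.arbitrary β, fun x hx y hy hxy => ?_⟩
  simp only [dif_pos hx, dif_pos hy] at hxy
  exact congrArg Subtype.val (e.injective hxy)

theorem FirstOrder.Language.Term.exists_eq_var_inl {L : FirstOrder.Language} [L.IsRelational]
    {α : Type*} (t : L.Term (α ⊕ Fin 0)) :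
    ∃ a, t = var (Sum.inl a) :=
  match t with
  | var (Sum.inl a) => ⟨a, rfl⟩
  | var (Sum.inr i) => i.elim0
  | func f _ => isEmptyElim f

section Lift

variable {L : FirstOrder.Language.{u, v}} {M N : Type} [L.Structure M] [Preorder N]

def liftRelMap (g : N → N → M) : ∀ {n}, (liftLang L).Relations n → (Fin n → N) → Prop
  | _ + 1, none, x => ∀ i, x (Fin.castSucc i) < x (Fin.last _)
  | _ + 1, some R, x => RelMap R fun i => g (x (Fin.last _)) (x i.castSucc)

@[reducible] def liftStructure (g : N → N → M) : (liftLang L).Structure N where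
  funMap f := Empty.elim f
  RelMap := liftRelMap g

variable [L.IsRelational] {g : N → N → M}

theorem exists_isQF_realize_snoc_iff_of_lt (hg : ∀ γ, (Iio γ).InjOn (g γ)) {n : ℕ}
    {ψ : L.Formula (Fin n)} (hψ : ψ.IsQF) :
    ∃ φ : (liftLang L).Formula (Fin (n + 1)), φ.IsQF ∧ ∀ (b : Fin n → N) (γ : N),
      (∀ i, b i < γ) → (@Formula.Realize _ _ (liftStructure g) _ φ (Fin.snoc b γ) ↔
        ψ.Realize (g γ ∘ b)) := by
  let _ := liftStructure (L := L) g
  induction hψ with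
  | falsum => exact ⟨⊥, IsQF.falsum, fun _ _ _ => Iff.rfl⟩
  | of_isAtomic h =>
    cases h with
    | equal t₁ t₂ =>
      obtain ⟨i₁, rfl⟩ := Term.exists_eq_var_inl t₁
      obtain ⟨i₂, rfl⟩ := Term.exists_eq_var_inl t₂
      refine ⟨(var (Sum.inl i₁.castSucc)).bdEqual (var (Sum.inl i₂.castSucc)),
        (IsAtomic.equal _ _).isQF, fun b γ hb => ?_⟩
      simp [Formula.Realize, (hg γ).eq_iff (hb i₁) (hb i₂)]
    | rel R ts =>
      choose j hj using fun i => Term.exists_eq_var_inl (ts i)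
      refine ⟨Relations.boundedFormula (L := liftLang L) (n := _ + 1) (some R)
        (Fin.snoc (fun i => var (Sum.inl (j i).castSucc)) (var (Sum.inl (Fin.last n)))),
        (IsAtomic.rel _ _).isQF, fun b γ hb => ?_⟩
      change RelMap R _ ↔ RelMap R _
      simp [hj]
  | imp _ _ ih₁ ih₂ =>
    obtain ⟨φ₁, hφ₁, h₁⟩ := ih₁
    obtain ⟨φ₂, hφ₂, h₂⟩ := ih₂
    exact ⟨φ₁.imp φ₂, hφ₁.imp hφ₂, fun b γ hb => imp_congr (h₁ b γ hb) (h₂ b γ hb)⟩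

theorem exists_isQF_realize_snoc_iff (hg : ∀ γ, (Iio γ).InjOn (g γ)) {n : ℕ}
    {ψ : L.Formula (Fin n)} (hψ : ψ.IsQF) :
    ∃ φ : (liftLang L).Formula (Fin (n + 1)), φ.IsQF ∧ ∀ (b : Fin n → N) (γ : N),
      @Formula.Realize _ _ (liftStructure g) _ φ (Fin.snoc b γ) ↔
        (∀ i, b i < γ) ∧ ψ.Realize (g γ ∘ b) := by
  let _ := liftStructure (L := L) g
  obtain ⟨χ, hχ, hχψ⟩ := exists_isQF_realize_snoc_iff_of_lt hg hψ
  let below := Relations.formula (L := liftLang L) (n := n + 1) none var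
  refine ⟨χ ⊓ below, hχ.inf (IsAtomic.rel _ _).isQF, fun b γ => ?_⟩
  have hbelow : below.Realize (Fin.snoc b γ) ↔ ∀ i, b i < γ := by
    change (∀ i : Fin n, (Fin.snoc b γ : Fin (n + 1) → N) i.castSucc <
      (Fin.snoc b γ : Fin (n + 1) → N) (Fin.last n)) ↔ _
    simp
  rw [Formula.realize_inf, hbelow]
  exact ⟨fun h => ⟨h.2, (hχψ b γ h.2).1 h.1⟩, fun h => ⟨(hχψ b γ h.1).2 h.2, h.1⟩⟩

theorem exists_snoc_enum_of_enum_image (hg : ∀ γ, (Iio γ).InjOn (g γ)) {γ : N} {s : Finset N}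
    (hs : ∀ x ∈ s, x < γ) {n : ℕ} {v : Fin n → M} (hv : Injective v)
    (hrange : range v = ↑(s.image (g γ))) :
    ∃ b : Fin n → N, g γ ∘ b = v ∧ (∀ i, b i < γ) ∧
      Injective (Fin.snoc b γ : Fin (n + 1) → N) ∧
      range (Fin.snoc b γ : Fin (n + 1) → N) = ↑(insert γ s) := by
  have hv_mem : ∀ i, v i ∈ s.image (g γ) := fun i => by
    rw [← Finset.mem_coe, ← hrange]; exact mem_range_self i
  choose b hbs hgb using fun i => Finset.mem_image.mp (hv_mem i)
  replace hgb : g γ ∘ b = v := funext hgb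
  have hb : ∀ i, b i < γ := fun i => hs _ (hbs i)
  have hrange_b : range b = ↑s := by
    refine (range_subset_iff.mpr hbs).antisymm fun x hx => ?_
    obtain ⟨i, hi⟩ : g γ x ∈ range v := by
      rw [hrange]; exact Finset.mem_coe.mpr (Finset.mem_image_of_mem _ hx)
    exact ⟨i, hg γ (hb i) (hs x hx) ((congrFun hgb i).trans hi)⟩
  refine ⟨b, hgb, hb, Fin.snoc_injective_of_injective (hgb ▸ hv).of_comp ?_, ?_⟩
  · rintro ⟨i, hi⟩
    exact (hb i).ne hi
  · rw [Fin.range_snoc, hrange_b, Finset.coe_insert]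

theorem exists_lift_of_realize (hg : ∀ γ, (Iio γ).InjOn (g γ)) {γ : N} {s : Finset N}
    (hs : ∀ x ∈ s, x < γ) {n : ℕ} {v : Fin n → M} (hv : Injective v)
    (hrange : range v = ↑(s.image (g γ))) {ψ : L.Formula (Fin n)} (hψ : ψ.IsQF)
    (hψv : ψ.Realize v) :
    ∃ (v' : Fin (n + 1) → N) (φ : (liftLang L).Formula (Fin (n + 1))),
      Injective v' ∧ range v' = ↑(insert γ s) ∧ φ.IsQF ∧
      @Formula.Realize _ _ (liftStructure g) _ φ v' ∧
      ∀ k a, @Formula.Realize _ _ (liftStructure g) _ φ (update v' k.castSucc a) →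
        a < γ ∧ ψ.Realize (update v k (g γ a)) := by
  obtain ⟨b, hgb, hb, hinj, hrange'⟩ := exists_snoc_enum_of_enum_image hg hs hv hrange
  obtain ⟨φ, hφ, hφψ⟩ := exists_isQF_realize_snoc_iff hg hψ
  refine ⟨_, φ, hinj, hrange', hφ, (hφψ b γ).2 ⟨hb, hgb ▸ hψv⟩, fun k a ha => ?_⟩
  rw [← Fin.snoc_update, hφψ, comp_update, hgb] at ha
  exact ⟨by simpa using ha.1 k, ha.2⟩

theorem rkGe_image_of_rkGe_insert (hg : ∀ γ, (Iio γ).InjOn (g γ)) (β : Ordinal) {γ : N}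
    {s : Finset N} (hs : ∀ x ∈ s, x < γ)
    (h : @RkGe (liftLang L) N (liftStructure g) (insert γ s) β) :
    RkGe L M (s.image (g γ)) β := by
  let _ := liftStructure (L := L) g
  induction β using WellFoundedLT.induction generalizing s with | _ β IH =>
  rw [RkGe] at h ⊢
  obtain ⟨hbase, hsucc⟩ := h
  refine ⟨fun n v hv hrange ψ hψ hψv k hcount => ?_, fun β' hβ' n v hv hrange ψ hψ hψv k => ?_⟩
  all_goals obtain ⟨v', φ, hv', hrange', hφ, hφv', hlift⟩ :=
    exists_lift_of_realize hg hs hv hrange hψ hψv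
  · exact hbase _ v' hv' hrange' φ hφ hφv' k.castSucc <|
      MapsTo.countable_of_injOn (fun a ha => (hlift k a ha).2)
        ((hg γ).mono fun a ha => (hlift k a ha).1) hcount
  · obtain ⟨a, ha, hrk, hφa⟩ := hsucc β' hβ' _ v' hv' hrange' φ hφ hφv' k.castSucc
    obtain ⟨haγ, hψa⟩ := hlift k a hφa
    refine ⟨g γ a, fun hmem => ?_, ?_, hψa⟩
    · obtain ⟨x, hx, hxa⟩ := Finset.mem_image.mp hmem
      exact ha (Finset.mem_insert_of_mem (hg γ (hs x hx) haγ hxa ▸ hx))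
    · rw [← Finset.image_insert]
      exact IH β' hβ' (Finset.forall_mem_insert _ _ _ |>.mpr ⟨haγ, hs⟩)
        (by rwa [Finset.insert_comm])

end Lift

theorem not_rkGe_add_one {L : FirstOrder.Language} [L.IsRelational] {M N : Type} [L.Structure M]
    [LinearOrder N] {g : N → N → M}
    (hg : ∀ γ, (Iio γ).InjOn (g γ)) {ε : Ordinal}
    (hM : ∀ w : Finset M, w.Nonempty → ¬ RkGe L M w ε) {w : Finset N} (hw : w.Nonempty) :
    ¬ @RkGe (liftLang L) N (liftStructure g) w (ε + 1) := by
  let _ := liftStructure (L := L) g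
  intro h
  obtain ⟨a, ha, hrk⟩ := exists_rkGe_insert_of_rkGe_add_one hw h
  have ht : (insert a w).Nonempty := Finset.insert_nonempty a w
  set γ := (insert a w).max' ht
  have hne : ((insert a w).erase γ).Nonempty := by
    obtain ⟨x, hx⟩ := hw
    exact Finset.Nontrivial.erase_nonempty
      ⟨a, Finset.mem_insert_self a w, x, Finset.mem_insert_of_mem hx, fun h => ha (h ▸ hx)⟩
  refine hM _ (hne.image _) (rkGe_image_of_rkGe_insert hg ε
    (fun _ => Finset.lt_max'_of_mem_erase_max' _ ht) ?_)
  rwa [Finset.insert_erase (Finset.max'_mem _ ht)]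

end

/-- If NPr_ε(λ) then NPr_{ε+1}(λ⁺). -/
theorem stmt_6 (ε : Ordinal) (lam : Cardinal) (h : NPr ε lam) :
    NPr (ε + 1) (Order.succ lam) := by
  obtain ⟨M, L, S, rfl, hRel, hFun, hM⟩ := h
  rcases isEmpty_or_nonempty M with hM₀ | hM₀
  · rw [mk_eq_zero, succ_zero]
    exact nPr_add_one_one ε
  let N := (Order.succ #M).ord.ToType
  have hN : #N = Order.succ #M := mk_ord_toType _
  have hIio (γ : N) : #(Set.Iio γ) ≤ #M := by
    have := mk_Iio_lt γ (by rw [hN, Ordinal.type_toType])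
    rwa [hN, Order.lt_succ_iff] at this
  choose g hg using fun γ : N => exists_injOn_of_mk_le (hIio γ)
  refine ⟨N, liftLang L, liftStructure g, hN, fun n => ?_,
    fun _ => inferInstanceAs (IsEmpty Empty),
    fun w hw => not_rkGe_add_one hg hM hw⟩
  cases n <;> dsimp [liftLang] <;> infer_instance
end

section
/- If NPr_ε(μ) holds for all μ < λ and cf(λ) = ω, then NPr_{ε+1}(λ) holds. -/
open FirstOrder Cardinal

attribute [local instance] Classical.propDecidable

/-!
Since `cf λ = ω`, the universe `λ` is the union of an increasing sequence of initial segments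
`Aₙ` of size `< λ`. Put on each `Aₙ` a copy of a model witnessing `NPr_ε(|Aₙ|)`, in pairwise
disjoint vocabularies, and add a unary predicate `Pₙ` for `Aₙ`. A finite `w` lies in some `Aₙ`.
Conjoining `Pₙ(xₖ)` to a formula of the `n`-th vocabulary forces every replacement of the
`k`-th element to stay inside `Aₙ`, so by induction on `α` the rank of `w` in the big model is
at least `α` only if it is in the `n`-th model. Hence all ranks stay below `ε`.
-/

open FirstOrder.Language Structure Set Function

theorem Order.exists_monotone_seq_unbounded_of_cof_le_aleph0 {α : Type*} [SemilatticeSup α]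
    [Nonempty α] [NoMaxOrder α] (h : Order.cof α ≤ ℵ₀) :
    ∃ u : ℕ → α, Monotone u ∧ ∀ x, ∃ n, x < u n := by
  obtain ⟨s, hs, hcard⟩ := Order.exists_cof_eq α
  obtain ⟨y, hy, -⟩ := hs (Classical.arbitrary α)
  obtain ⟨t, rfl⟩ := (le_aleph0_iff_set_countable.1 (hcard ▸ h)).exists_eq_range ⟨y, hy⟩
  refine ⟨partialSups t, (partialSups t).monotone, fun x => ?_⟩
  obtain ⟨x', hxx'⟩ := exists_gt x
  obtain ⟨_, ⟨n, rfl⟩, hx't⟩ := hs x'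
  exact ⟨n, hxx'.trans_le (hx't.trans (le_partialSups t n))⟩

theorem Cardinal.exists_monotone_cover_of_cof_ord_eq_aleph0 {c : Cardinal}
    (h : c.ord.cof = ℵ₀) :
    ∃ A : ℕ → Set c.ord.ToType, Monotone A ∧ (∀ n, #(A n) < c) ∧ ⋃ n, A n = Set.univ := by
  have hc : ℵ₀ ≤ c := h ▸ Ordinal.cof_ord_le c
  have := Cardinal.noMaxOrder hc
  have : Nonempty c.ord.ToType := by
    rw [Ordinal.nonempty_toType_iff, ne_eq, ord_eq_zero]; exact (aleph0_pos.trans_le hc).ne'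
  obtain ⟨u, hu, hlt⟩ :=
    Order.exists_monotone_seq_unbounded_of_cof_le_aleph0 (by rw [Ordinal.cof_toType, h])
  exact ⟨fun n => Iio (u n), fun m n hmn => Iio_subset_Iio (hu hmn),
    fun n => by simpa using mk_Iio_lt (u n) (by simp), iUnion_eq_univ_iff.2 hlt⟩

theorem RkGe.mono {L : Language} {M : Type} [L.Structure M] {w : Finset M} {α β : Ordinal}
    (h : RkGe L M w α) (hβα : β ≤ α) : RkGe L M w β := by
  rw [RkGe] at h ⊢
  exact ⟨h.1, fun γ hγ => h.2 γ (hγ.trans_le hβα)⟩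

theorem NPr.mono {ε ε' : Ordinal} {lam : Cardinal} (h : NPr ε lam) (hεε' : ε ≤ ε') :
    NPr ε' lam := by
  obtain ⟨M, L, S, hM, hrel, hfun, hrk⟩ := h
  exact ⟨M, L, S, hM, hrel, hfun, fun w hw hw' => hrk w hw (hw'.mono hεε')⟩

namespace FirstOrder.Language

theorem LHom.isQF_onBoundedFormula {L L' : Language} (Φ : L →ᴸ L') {γ : Type*} {n : ℕ}
    {φ : L.BoundedFormula γ n} (h : φ.IsQF) : (Φ.onBoundedFormula φ).IsQF := by
  induction h with
  | falsum => exact BoundedFormula.isQF_bot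
  | of_isAtomic h =>
    cases h with
    | equal t₁ t₂ => exact (BoundedFormula.IsAtomic.equal _ _).isQF
    | rel R ts => exact (BoundedFormula.IsAtomic.rel _ _).isQF
  | imp _ _ ih₁ ih₂ => exact ih₁.imp ih₂

theorem BoundedFormula.IsQF.realize_formula_embedding {L : Language} {M N γ : Type*}
    [L.Structure M] [L.Structure N] {φ : L.Formula γ} (h : φ.IsQF) (f : M ↪[L] N)
    (v : γ → M) :
    φ.Realize (f ∘ v) ↔ φ.Realize v := by
  rw [Formula.Realize, Formula.Realize, ← h.realize_embedding f,
    Subsingleton.elim (f ∘ default) default]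

section Transfer

variable {L L' : Language} (Φ : L →ᴸ L') (P : L'.Relations 1)

def relativize {m : ℕ} (ψ : L.Formula (Fin m)) (k : Fin m) : L'.Formula (Fin m) :=
  Φ.onFormula ψ ⊓ P.formula₁ (Term.var k)

theorem isQF_relativize {m : ℕ} {ψ : L.Formula (Fin m)} (hψ : ψ.IsQF) (k : Fin m) :
    (relativize Φ P ψ k).IsQF :=
  (Φ.isQF_onBoundedFormula hψ).inf (BoundedFormula.IsAtomic.rel _ _).isQF

variable {M N : Type} [L.Structure M] [L.Structure N] [L'.Structure N]
  (f : M ↪[L] N) {P}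

theorem realize_relativize_update [Φ.IsExpansionOn N] (hP : ∀ a, RelMap P ![a] ↔ a ∈ range f)
    {m : ℕ} {ψ : L.Formula (Fin m)} (hψ : ψ.IsQF) (v : Fin m → M) (k : Fin m) (a : N) :
    (relativize Φ P ψ k).Realize (update (f ∘ v) k a) ↔
      ∃ b, f b = a ∧ ψ.Realize (update v k b) := by
  simp only [relativize, Formula.realize_inf, Formula.realize_rel₁, Term.realize_var,
    update_self, hP, LHom.realize_onFormula]
  constructor
  · rintro ⟨hψa, b, rfl⟩
    rw [← comp_update, hψ.realize_formula_embedding] at hψa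
    exact ⟨b, rfl, hψa⟩
  · rintro ⟨b, rfl, hb⟩
    rw [← comp_update, hψ.realize_formula_embedding]
    exact ⟨hb, b, rfl⟩

theorem RkGe.of_embedding [Φ.IsExpansionOn N] (hP : ∀ a, RelMap P ![a] ↔ a ∈ range f)
    {w : Finset M} {α : Ordinal} (h : RkGe L' N (w.map f.toEmbedding) α) : RkGe L M w α := by
  induction α using WellFoundedLT.induction generalizing w with
  | _ α IH =>
  rw [RkGe] at h ⊢
  obtain ⟨hbase, hsucc⟩ := h
  have hrange {m} {v : Fin m → M} (hvw : range v = ↑w) :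
      range (f ∘ v) = ↑(w.map f.toEmbedding) := by
    rw [range_comp, hvw, Finset.coe_map]
    rfl
  have hrealize {m} {v : Fin m → M} {ψ : L.Formula (Fin m)} (hψ : ψ.IsQF) (hψv : ψ.Realize v)
      (k : Fin m) : (relativize Φ P ψ k).Realize (f ∘ v) := by
    have := (realize_relativize_update Φ f hP hψ v k ((f ∘ v) k)).2 ⟨v k, rfl, by simpa⟩
    rwa [update_eq_self] at this
  refine ⟨fun m v hv hvw ψ hψ hψv k hcount => ?_, fun β hβ m v hv hvw ψ hψ hψv k => ?_⟩
  · refine hbase m (f ∘ v) (f.injective.comp hv) (hrange hvw) _ (isQF_relativize Φ P hψ k)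
      (hrealize hψ hψv k) k ?_
    have : {a | (relativize Φ P ψ k).Realize (update (f ∘ v) k a)} =
        f '' {b | ψ.Realize (update v k b)} := by
      ext a
      simp only [mem_ofPred_eq, realize_relativize_update Φ f hP hψ, mem_image]
      exact exists_congr fun b => and_comm
    rw [this]
    exact hcount.image f
  · obtain ⟨a, ha, hrk, hreal⟩ := hsucc β hβ m (f ∘ v) (f.injective.comp hv) (hrange hvw) _
      (isQF_relativize Φ P hψ k) (hrealize hψ hψv k) k
    obtain ⟨b, rfl, hb⟩ := (realize_relativize_update Φ f hP hψ v k a).1 hreal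
    refine ⟨b, fun hbw => ha (Finset.mem_map_of_mem _ hbw), IH β hβ ?_, hb⟩
    rwa [Finset.map_insert]

end Transfer

section Union

variable {ι : Type} (L : ι → Language.{0, 0})

def unionLanguage : Language.{0, 0} where
  Functions _ := Empty
  Relations m := (Σ i, (L i).Relations m) ⊕ ι

variable {M : ι → Type} [∀ i, (L i).Structure (M i)] {N : Type}

/-- The predicate `.inr i` is the paper's `Pᵢ`, interpreted as the copy `range (j i)` of `M i`. -/
abbrev unionStructure (j : ∀ i, M i ↪ N) : (unionLanguage L).Structure N where
  funMap f := Empty.elim f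
  RelMap {m} r x := match r with
    | .inl ⟨i, R⟩ => ∃ y : Fin m → M i, j i ∘ y = x ∧ RelMap R y
    | .inr i => ∀ k, x k ∈ range (j i)

def unionLanguage.incl (i : ι) [(L i).IsRelational] : L i →ᴸ unionLanguage L where
  onFunction {_} f := isEmptyElim f
  onRelation {_} R := .inl ⟨i, R⟩

variable {L}

theorem RkGe.of_unionStructure (j : ∀ i, M i ↪ N) (i : ι) [(L i).IsRelational]
    {w : Finset (M i)} {α : Ordinal}
    (h : @RkGe (unionLanguage L) N (unionStructure L j) (w.map (j i)) α) :
    RkGe (L i) (M i) w α := by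
  let := unionStructure L j
  let := (unionLanguage.incl L i).reduct N
  let f : M i ↪[L i] N :=
    { toEmbedding := j i
      map_fun' := fun f => isEmptyElim f
      map_rel' := fun R x => ⟨fun ⟨y, hy, hR⟩ => (j i).injective.comp_left hy ▸ hR,
        fun hR => ⟨x, rfl, hR⟩⟩ }
  refine RkGe.of_embedding (unionLanguage.incl L i) f (P := .inr i) (fun a => ?_) h
  exact Fin.forall_fin_one

end Union

end FirstOrder.Language

theorem NPr.of_directed_cover {ι : Type} [Countable ι] {ε : Ordinal} {N : Type}
    {A : ι → Set N} (hdir : Directed (· ⊆ ·) A) (hcover : ⋃ i, A i = Set.univ)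
    (h : ∀ i, NPr ε #(A i)) :
    NPr ε #N := by
  choose M L S hM hcount hrel hrk using h
  have (i : ι) : ∃ j : M i ↪ N, range j = A i := by
    obtain ⟨e⟩ := Cardinal.eq.1 (hM i)
    refine ⟨e.toEmbedding.trans (Embedding.subtype _), ?_⟩
    show range (Subtype.val ∘ e) = A i
    rw [range_comp, e.range_eq_univ, image_univ, Subtype.range_coe]
  choose j hj using this
  refine ⟨N, unionLanguage L, unionStructure L j, rfl, fun m => ?_, fun m => ?_,
    fun w hw hrkw => ?_⟩
  · have := fun i => hcount i m
    exact inferInstanceAs (Countable ((Σ i, (L i).Relations m) ⊕ ι))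
  · exact inferInstanceAs (IsEmpty Empty)
  · have : Nonempty ι := by
      obtain ⟨x, -⟩ := hw
      exact (mem_iUnion.1 (hcover ▸ mem_univ x)).nonempty
    obtain ⟨i, hi⟩ :=
      hdir.exists_mem_subset_of_finset_subset_biUnion (hcover ▸ subset_univ (w : Set N))
    obtain ⟨w', -, rfl⟩ :=
      Finset.subset_set_image_iff.1 (show ↑w ⊆ j i '' univ by simpa [hj])
    have := hrel i
    rw [← Finset.map_eq_image] at hrkw hw
    exact hrk i w' (Finset.map_nonempty.1 hw) (RkGe.of_unionStructure j i hrkw)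

/-- If NPr_ε(μ) for all μ < λ and cf(λ) = ω, then NPr_{ε+1}(λ). -/
theorem stmt_7 (ε : Ordinal) (lam : Cardinal)
    (h : ∀ μ : Cardinal, μ < lam → NPr ε μ)
    (hcf : lam.ord.cof = Cardinal.aleph0) :
    NPr (ε + 1) lam := by
  obtain ⟨A, hA, hAlt, hcover⟩ := exists_monotone_cover_of_cof_ord_eq_aleph0 hcf
  have := NPr.of_directed_cover hA.directed_le hcover fun n => h _ (hAlt n)
  rw [mk_toType, card_ord] at this
  exact this.mono le_self_add
end

section
/- If m ∈ 𝐌_{T̄,k} and ∞ > ndrk(m) = β > α, then there is n ∈ 𝐌_{T̄,k} with m ⊑ n and ndrk(n) = α. -/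
open scoped Classical

/-- Finite binary sequences, i.e. elements of `2^{<ω}`. -/
abbrev Seq2 : Type := List (ZMod 2)

/-- Coordinatewise addition mod 2 of finite binary sequences (of the same length). -/
def seqAdd (x y : Seq2) : Seq2 := List.zipWith (· + ·) x y

/-- `T ⊆ 2^{<ω}` is a tree with no maximal nodes. -/
def IsTreeNoMax (T : Set Seq2) : Prop :=
  (∀ s ∈ T, ∀ t : Seq2, t <+: s → t ∈ T) ∧
  (∀ s ∈ T, ∃ t ∈ T, s <+: t ∧ s ≠ t)

/-- An element of `𝐌_{T̄,k}` (`k = 2ι`): a tuple `(ℓ, u, h̄, ḡ)` as in Definition 3.3.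
The functions `h_i`, `g_i` are recorded as total functions that take the default values
`0` resp. `[]` off the domain `u^⟨2⟩`. -/
structure MTK (T : ℕ → Set Seq2) (ι : ℕ) where
  len : ℕ
  u : Finset Seq2
  h : Fin ι → Seq2 → Seq2 → ℕ
  g : Fin ι → Seq2 → Seq2 → Seq2
  len_pos : 0 < len
  mem_len : ∀ η ∈ u, η.length = len
  two_le_card : 2 ≤ u.card
  g_mem : ∀ (i : Fin ι), ∀ η ∈ u, ∀ ν ∈ u, η ≠ ν →
    g i η ν ∈ T (h i η ν) ∧ (g i η ν).length = len
  add_eq : ∀ (i : Fin ι), ∀ η ∈ u, ∀ ν ∈ u, η ≠ ν →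
    seqAdd η (g i η ν) = seqAdd ν (g i ν η)
  no_rep : ∀ η ∈ u, ∀ ν ∈ u, η ≠ ν →
    Function.Injective (fun p : Fin ι × Bool => if p.2 then g p.1 η ν else g p.1 ν η)
  h_default : ∀ i η ν, ¬ (η ∈ u ∧ ν ∈ u ∧ η ≠ ν) → h i η ν = 0
  g_default : ∀ i η ν, ¬ (η ∈ u ∧ ν ∈ u ∧ η ≠ ν) → g i η ν = []

namespace MTK

variable {T : ℕ → Set Seq2} {ι : ℕ}

/-- `m ⊑ n` : `n` extends `m`. -/
def Ext (m n : MTK T ι) : Prop :=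
  m.len ≤ n.len ∧
  m.u = n.u.image (fun η => η.take m.len) ∧
  ∀ η ∈ n.u, ∀ ν ∈ n.u, η ≠ ν → η.take m.len ≠ ν.take m.len →
    ∀ i : Fin ι,
      m.h i (η.take m.len) (ν.take m.len) = n.h i η ν ∧
      m.g i (η.take m.len) (ν.take m.len) = (n.g i η ν).take m.len

/-- `NdrkGe m α` says `ndrk(m) ≥ α`. -/
def NdrkGe (m : MTK T ι) (α : Ordinal) : Prop :=
  ∀ β : Ordinal, β < α → ∀ ν ∈ m.u, ∃ n : MTK T ι,
    m.len < n.len ∧ m.Ext n ∧ NdrkGe n β ∧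
    2 ≤ (n.u.filter (fun η => ν <+: η)).card
termination_by α

end MTK

/-! At a node `ν ∈ u_m` witnessing the failure of `ndrk(m) ≥ β + 1`, the witnesses for
`ndrk(m) ≥ β` have rank `≥ α` but not `≥ β`. Since `ndrk(n) ≥ δ` already holds when
`ndrk(n) ≥ γ + 1` for all `γ < δ`, such a witness has an exact rank in `[α, β)`, and induction
on `β` finishes. -/

namespace MTK

variable {T : ℕ → Set Seq2} {ι : ℕ}

theorem Ext.trans {m n p : MTK T ι} (hmn : m.Ext n) (hnp : n.Ext p) : m.Ext p := by
  obtain ⟨hle₁, hu₁, hg₁⟩ := hmn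
  obtain ⟨hle₂, hu₂, hg₂⟩ := hnp
  have take_take (η : Seq2) : (η.take n.len).take m.len = η.take m.len := by
    rw [List.take_take, min_eq_left hle₁]
  refine ⟨hle₁.trans hle₂, ?_, ?_⟩
  · rw [hu₁, hu₂, Finset.image_image]
    exact Finset.image_congr fun η _ => take_take η
  · intro η hη ν hν hne hne_m i
    have hη' : η.take n.len ∈ n.u := hu₂ ▸ Finset.mem_image_of_mem _ hη
    have hν' : ν.take n.len ∈ n.u := hu₂ ▸ Finset.mem_image_of_mem _ hν
    have hne_n : η.take n.len ≠ ν.take n.len := by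
      intro h
      exact hne_m (by rw [← take_take η, ← take_take ν, h])
    have hm := hg₁ _ hη' _ hν' hne_n (by rwa [take_take, take_take]) i
    have hn := hg₂ η hη ν hν hne hne_n i
    rw [take_take, take_take] at hm
    exact ⟨hm.1.trans hn.1, by rw [hm.2, hn.2, take_take]⟩

theorem NdrkGe.mono {m : MTK T ι} {α β : Ordinal} (h : m.NdrkGe β) (hαβ : α ≤ β) :
    m.NdrkGe α := by
  rw [NdrkGe] at h ⊢
  exact fun γ hγ => h γ (hγ.trans_le hαβ)

theorem ndrkGe_of_forall_lt_ndrkGe_add_one {m : MTK T ι} {α : Ordinal}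
    (h : ∀ γ < α, m.NdrkGe (γ + 1)) : m.NdrkGe α := by
  rw [NdrkGe]
  intro γ hγ
  have hγ₁ := h γ hγ
  rw [NdrkGe] at hγ₁
  exact hγ₁ γ (Order.lt_add_one_iff.mpr le_rfl)

/-- `ndrk(m) = α`. -/
def NdrkEq (m : MTK T ι) (α : Ordinal) : Prop :=
  m.NdrkGe α ∧ ¬ m.NdrkGe (α + 1)

theorem exists_lt_ndrkEq_of_not_ndrkGe {m : MTK T ι} {β : Ordinal} (h : ¬ m.NdrkGe β) :
    ∃ δ < β, m.NdrkEq δ := by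
  induction β using WellFoundedLT.induction with
  | _ β ih =>
    obtain ⟨γ, hγβ, hγ⟩ : ∃ γ < β, ¬ m.NdrkGe (γ + 1) := by
      by_contra! hall
      exact h (ndrkGe_of_forall_lt_ndrkGe_add_one hall)
    by_cases hmγ : m.NdrkGe γ
    · exact ⟨γ, hγβ, hmγ, hγ⟩
    · obtain ⟨δ, hδγ, hδ⟩ := ih γ hγβ hmγ
      exact ⟨δ, hδγ.trans hγβ, hδ⟩

theorem NdrkEq.exists_ext_ndrkGe_not_ndrkGe {m : MTK T ι} {α β : Ordinal} (hm : m.NdrkEq β)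
    (hαβ : α < β) : ∃ n : MTK T ι, m.Ext n ∧ n.NdrkGe α ∧ ¬ n.NdrkGe β := by
  obtain ⟨hge, hlt⟩ := hm
  rw [NdrkGe] at hge hlt
  push Not at hlt
  obtain ⟨γ, hγ, ν, hν, hfail⟩ := hlt
  obtain ⟨n, hlen, hext, hnα, hcard⟩ := hge α hαβ ν hν
  refine ⟨n, hext, hnα, fun hnβ => ?_⟩
  have hγβ : γ ≤ β := Order.lt_add_one_iff.mp hγ
  exact (hfail n hlen hext (hnβ.mono hγβ)).not_ge hcard

theorem NdrkEq.exists_ext_ndrkEq {m : MTK T ι} {α β : Ordinal} (hm : m.NdrkEq β)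
    (hαβ : α < β) : ∃ n : MTK T ι, m.Ext n ∧ n.NdrkEq α := by
  induction β using WellFoundedLT.induction generalizing m with
  | _ β ih =>
    obtain ⟨n, hmn, hnα, hnβ⟩ := hm.exists_ext_ndrkGe_not_ndrkGe hαβ
    obtain ⟨δ, hδβ, hnδ⟩ := exists_lt_ndrkEq_of_not_ndrkGe hnβ
    have hαδ : α ≤ δ := by
      by_contra! hδα
      exact hnδ.2 (hnα.mono (Order.add_one_le_iff.mpr hδα))
    rcases hαδ.eq_or_lt with rfl | hαδ
    · exact ⟨n, hmn, hnδ⟩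
    · obtain ⟨p, hnp, hp⟩ := ih δ hδβ hnδ hαδ
      exact ⟨p, hmn.trans hnp, hp⟩

end MTK

theorem stmt_15_general (T : ℕ → Set Seq2) (ι : ℕ) (m : MTK T ι) (α β : Ordinal)
    (hge : MTK.NdrkGe m β) (hlt : ¬ MTK.NdrkGe m (β + 1)) (hαβ : α < β) :
    ∃ n : MTK T ι, m.Ext n ∧ MTK.NdrkGe n α ∧ ¬ MTK.NdrkGe n (α + 1) :=
  MTK.NdrkEq.exists_ext_ndrkEq ⟨hge, hlt⟩ hαβ

/-- If ∞ > ndrk(m) = β > α then some n ⊒ m has ndrk(n) = α. -/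
theorem stmt_15 (T : ℕ → Set Seq2) (ι : ℕ) (hι : 2 ≤ ι)
    (hT : ∀ n, IsTreeNoMax (T n)) (m : MTK T ι) (α β : Ordinal)
    (hge : MTK.NdrkGe m β) (hlt : ¬ MTK.NdrkGe m (β + 1)) (hαβ : α < β) :
    ∃ n : MTK T ι, m.Ext n ∧ MTK.NdrkGe n α ∧ ¬ MTK.NdrkGe n (α + 1) :=
  stmt_15_general T ι m α β hge hlt hαβ
end

section
/- Restriction increases ndrk: if m ∈ 𝐌_{T̄,k}, u' ⊆ u_m with |u'| ≥ 2, and m↾u' denotes (ℓ_m, u', h̄_m restricted to (u')^⟨2⟩, ḡ_m restricted to (u')^⟨2⟩), then m↾u' ∈ 𝐌_{T̄,k} and ndrk(m) ≤ ndrk(m↾u'). -/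
open scoped Classical

/-- m' is the restriction of m to u': same length, universe u', restricted h and g. -/
def IsRestrict {T : ℕ → Set Seq2} {ι : ℕ} (m : MTK T ι) (u' : Finset Seq2)
    (m' : MTK T ι) : Prop :=
  m'.len = m.len ∧ m'.u = u' ∧
  ∀ i : Fin ι, ∀ η ∈ u', ∀ ν ∈ u', η ≠ ν →
    m'.h i η ν = m.h i η ν ∧ m'.g i η ν = m.g i η ν

section Aux

variable {T : ℕ → Set Seq2} {ι : ℕ}

/-- Explicit restriction construction. -/
noncomputable def restrictMTK (m : MTK T ι) (u' : Finset Seq2) (hsub : u' ⊆ m.u)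
    (hcard : 2 ≤ u'.card) : MTK T ι where
  len := m.len
  u := u'
  h := fun i η ν => if η ∈ u' ∧ ν ∈ u' ∧ η ≠ ν then m.h i η ν else 0
  g := fun i η ν => if η ∈ u' ∧ ν ∈ u' ∧ η ≠ ν then m.g i η ν else []
  len_pos := m.len_pos
  mem_len := fun η hη => m.mem_len η (hsub hη)
  two_le_card := hcard
  g_mem := by
    intro i η hη ν hν hne
    have hc : η ∈ u' ∧ ν ∈ u' ∧ η ≠ ν := ⟨hη, hν, hne⟩
    simp only [if_pos hc]
    exact m.g_mem i η (hsub hη) ν (hsub hν) hne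
  add_eq := by
    intro i η hη ν hν hne
    have hc : η ∈ u' ∧ ν ∈ u' ∧ η ≠ ν := ⟨hη, hν, hne⟩
    have hc' : ν ∈ u' ∧ η ∈ u' ∧ ν ≠ η := ⟨hν, hη, hne.symm⟩
    simp only [if_pos hc, if_pos hc']
    exact m.add_eq i η (hsub hη) ν (hsub hν) hne
  no_rep := by
    intro η hη ν hν hne
    have : (fun p : Fin ι × Bool =>
        if p.2 then (if η ∈ u' ∧ ν ∈ u' ∧ η ≠ ν then m.g p.1 η ν else [])
        else (if ν ∈ u' ∧ η ∈ u' ∧ ν ≠ η then m.g p.1 ν η else [])) =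
        (fun p : Fin ι × Bool => if p.2 then m.g p.1 η ν else m.g p.1 ν η) := by
      funext p
      have hc : η ∈ u' ∧ ν ∈ u' ∧ η ≠ ν := ⟨hη, hν, hne⟩
      have hc' : ν ∈ u' ∧ η ∈ u' ∧ ν ≠ η := ⟨hν, hη, hne.symm⟩
      simp only [if_pos hc, if_pos hc']
    rw [this]
    exact m.no_rep η (hsub hη) ν (hsub hν) hne
  h_default := by intro i η ν h; simp only [if_neg h]
  g_default := by intro i η ν h; simp only [if_neg h]

lemma isRestrict_restrictMTK (m : MTK T ι) (u' : Finset Seq2) (hsub : u' ⊆ m.u)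
    (hcard : 2 ≤ u'.card) : IsRestrict m u' (restrictMTK m u' hsub hcard) := by
  refine ⟨rfl, rfl, ?_⟩
  intro i η hη ν hν hne
  have hc : η ∈ u' ∧ ν ∈ u' ∧ η ≠ ν := ⟨hη, hν, hne⟩
  constructor <;> simp only [restrictMTK, if_pos hc]

lemma ndrkGe_restrict : ∀ α : Ordinal, ∀ m : MTK T ι, ∀ u' : Finset Seq2,
    u' ⊆ m.u → 2 ≤ u'.card → ∀ m' : MTK T ι, IsRestrict m u' m' →
    m.NdrkGe α → m'.NdrkGe α := by
  intro α
  induction α using Ordinal.induction with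
  | h α IH =>
    intro m u' hsub hcard m' hres hm
    rw [MTK.NdrkGe] at hm ⊢
    intro β hβ ν hν
    rw [hres.2.1] at hν
    obtain ⟨n, hlen, hext, hnd, hfil⟩ := hm β hβ ν (hsub hν)
    set u'' : Finset Seq2 := n.u.filter (fun η => η.take m.len ∈ u') with hu''
    have hsub'' : u'' ⊆ n.u := Finset.filter_subset _ _
    have himg : u''.image (fun η => η.take m.len) = u' := by
      apply Finset.Subset.antisymm
      · intro x hx
        obtain ⟨η, hη, rfl⟩ := Finset.mem_image.mp hx
        exact (Finset.mem_filter.mp hη).2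
      · intro x hx
        have hxm : x ∈ m.u := hsub hx
        rw [hext.2.1] at hxm
        obtain ⟨η, hη, rfl⟩ := Finset.mem_image.mp hxm
        exact Finset.mem_image.mpr ⟨η, Finset.mem_filter.mpr ⟨hη, hx⟩, rfl⟩
    have hcard'' : 2 ≤ u''.card := by
      calc 2 ≤ u'.card := hcard
        _ = (u''.image (fun η => η.take m.len)).card := by rw [himg]
        _ ≤ u''.card := Finset.card_image_le
    set n' := restrictMTK n u'' hsub'' hcard'' with hn'
    have hresn : IsRestrict n u'' n' := isRestrict_restrictMTK n u'' hsub'' hcard''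
    refine ⟨n', ?_, ?_, ?_, ?_⟩
    · rw [hres.1, hresn.1]; exact hlen
    · refine ⟨?_, ?_, ?_⟩
      · rw [hres.1, hresn.1]; exact hext.1
      · rw [hres.1, hres.2.1, hresn.2.1, himg]
      · intro η hη₀ ξ hξ₀ hne htne i
        rw [hresn.2.1] at hη₀ hξ₀
        have hη : η ∈ n.u := hsub'' hη₀
        have hξ : ξ ∈ n.u := hsub'' hξ₀
        rw [hres.1] at htne ⊢
        have hηu' : η.take m.len ∈ u' := (Finset.mem_filter.mp hη₀).2
        have hξu' : ξ.take m.len ∈ u' := (Finset.mem_filter.mp hξ₀).2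
        have h1 := (hres.2.2 i _ hηu' _ hξu' htne).1
        have h2 := (hres.2.2 i _ hηu' _ hξu' htne).2
        have h3 := (hext.2.2 η hη ξ hξ hne htne i).1
        have h4 := (hext.2.2 η hη ξ hξ hne htne i).2
        have h5 := (hresn.2.2 i η hη₀ ξ hξ₀ hne).1
        have h6 := (hresn.2.2 i η hη₀ ξ hξ₀ hne).2
        exact ⟨by rw [h1, h3, h5], by rw [h2, h4, h6]⟩
    · exact IH β hβ n u'' hsub'' hcard'' n' hresn hnd
    · refine le_trans hfil (Finset.card_le_card ?_)
      intro η hη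
      obtain ⟨hη₁, hη₂⟩ := Finset.mem_filter.mp hη
      refine Finset.mem_filter.mpr ⟨?_, hη₂⟩
      rw [hresn.2.1]
      refine Finset.mem_filter.mpr ⟨hη₁, ?_⟩
      have hνlen : ν.length = m.len := m.mem_len ν (hsub hν)
      have : η.take m.len = ν := by
        obtain ⟨t, rfl⟩ := hη₂
        rw [← hνlen, List.take_left]
      rw [this]; exact hν

end Aux

/-- Restriction increases ndrk: m restricted to u' is in MTK and ndrk(m) ≤ ndrk(m↾u'). -/
theorem stmt_17 (T : ℕ → Set Seq2) (ι : ℕ) (hι : 2 ≤ ι)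
    (hT : ∀ n, IsTreeNoMax (T n)) (m : MTK T ι)
    (u' : Finset Seq2) (hsub : u' ⊆ m.u) (hcard : 2 ≤ u'.card) :
    (∃ m' : MTK T ι, IsRestrict m u' m') ∧
    (∀ m' : MTK T ι, IsRestrict m u' m' →
      ∀ α : Ordinal, MTK.NdrkGe m α → MTK.NdrkGe m' α) := by
  refine ⟨⟨restrictMTK m u' hsub hcard, isRestrict_restrictMTK m u' hsub hcard⟩, ?_⟩
  intro m' hres α hα
  exact ndrkGe_restrict α m u' hsub hcard m' hres hα
end
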